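/- Let G = (V' : V'', E) be a bipartite Δ-regular connected graph with |V'| = |V''| = n > 1 and second-eigenvalue ratio γ = γ_G, and let χ : V' ∪ V'' → ℝ be any function on the vertices. Define w(e) = χ(u)χ(v) for each edge e = {u,v}, and the averages E_G{w} = (1/(Δn)) Σ_{e∈E} w(e), E'_G{χ^i} = (1/n) Σ_{u∈V'} χ(u)^i, E''_G{χ^i} = (1/n) Σ_{u∈V''} χ(u)^i, and variances Var'_G{χ} = E'_G{χ²} − (E'_G{χ})², Var''_G{χ} = E''_G{χ²} − (E''_G{χ})². Then |E_G{w} − E'_G{χ}·E''_G{χ}| ≤ γ·√(Var'_G{χ} · Var''_G{χ}). -/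

import Mathlib

/-!
Center `χ` on each side: `x = χ|V' - E'`, `y = χ|V'' - E''`, both orthogonal to the constants.
The adjacency matrix is `fromBlocks 0 B Bᵀ 0` with `B` the biadjacency block, whose row and
column sums are `Δ`; hence the cross terms vanish and the edge sum is `Δ n E' E'' + x ⬝ B y`.
The vector `z = (t x, s y)` is orthogonal to the constants and `z ⬝ A z = 2 t s (x ⬝ B y)`, so the
Rayleigh bound gives `2 t s (x ⬝ B y) ≤ γ Δ (t² |x|² + s² |y|²)` for all `t, s`. Optimizing over
`t, s` gives `|x ⬝ B y| ≤ γ Δ |x| |y| = γ Δ n √(Var' Var'')`.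
-/

open Matrix BigOperators

theorem eq_zero_of_forall_mul_le {T K : ℝ} (h : ∀ t : ℝ, t * T ≤ K) : T = 0 := by
  by_contra hT
  have := h ((|K| + 1) / T)
  rw [div_mul_cancel₀ _ hT] at this
  linarith [le_abs_self K]

theorem abs_le_mul_sqrt_mul_of_forall {T c P Q : ℝ} (hP : 0 ≤ P) (hQ : 0 ≤ Q)
    (h : ∀ t s : ℝ, 2 * (t * s) * T ≤ c * (t ^ 2 * P + s ^ 2 * Q)) : |T| ≤ c * √(P * Q) := by
  rcases hP.eq_or_lt with rfl | hP
  · have hT : T = 0 := eq_zero_of_forall_mul_le (K := c * Q) fun t => by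
      linarith [h (t / 2) 1]
    simp [hT]
  rcases hQ.eq_or_lt with rfl | hQ
  · have hT : T = 0 := eq_zero_of_forall_mul_le (K := c * P) fun s => by
      linarith [h 1 (s / 2)]
    simp [hT]
  have hr2 : √(P * Q) ^ 2 = P * Q := Real.sq_sqrt (by positivity)
  have hQP : √Q * √P = √(P * Q) := by rw [Real.sqrt_mul hP.le, mul_comm]
  -- `t = ±√Q`, `s = √P` is the optimal choice
  have hsq (ε : ℝ) (hε : ε ^ 2 = 1) : 2 * √(P * Q) * (ε * T) ≤ 2 * √(P * Q) * (c * √(P * Q)) := by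
    have := h (ε * √Q) √P
    rw [mul_pow, hε, one_mul, Real.sq_sqrt hQ.le, Real.sq_sqrt hP.le, mul_assoc ε, hQP] at this
    linear_combination this - 2 * c * hr2
  rw [abs_le]
  constructor
  · linarith [le_of_mul_le_mul_left (hsq (-1) (by norm_num)) (by positivity)]
  · linarith [le_of_mul_le_mul_left (hsq 1 (by norm_num)) (by positivity)]

section Quadratic

variable {ι : Type*} [Fintype ι]

theorem dotProduct_mulVec_le_of_mem_upperBounds {A : Matrix ι ι ℝ} {u z : ι → ℝ} {c : ℝ}
    (hc : c ∈ upperBounds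
      {ρ : ℝ | ∃ x : ι → ℝ, x ≠ 0 ∧ x ⬝ᵥ u = 0 ∧ x ⬝ᵥ A *ᵥ x = ρ * (x ⬝ᵥ x)})
    (hz : z ⬝ᵥ u = 0) : z ⬝ᵥ A *ᵥ z ≤ c * (z ⬝ᵥ z) := by
  rcases eq_or_ne z 0 with rfl | hz0
  · simp
  have hpos : 0 < z ⬝ᵥ z :=
    (Finset.sum_nonneg fun i _ => mul_self_nonneg (z i)).lt_of_ne
      (Ne.symm (dotProduct_self_eq_zero.not.mpr hz0))
  exact (div_le_iff₀ hpos).mp (hc ⟨z, hz0, hz, (div_mul_cancel₀ _ hpos.ne').symm⟩)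

theorem sub_mean_dotProduct_one {f : ι → ℝ} {m : ℝ}
    (hm : m = 1 / (Fintype.card ι : ℝ) * ∑ i, f i) : (fun i => f i - m) ⬝ᵥ 1 = 0 := by
  rcases isEmpty_or_nonempty ι with hι | hι
  · simp
  rw [dotProduct_one, Finset.sum_sub_distrib, Finset.sum_const, Finset.card_univ, nsmul_eq_mul,
    hm]
  field_simp
  ring

theorem sub_mean_dotProduct_self {f : ι → ℝ} {m : ℝ}
    (hm : m = 1 / (Fintype.card ι : ℝ) * ∑ i, f i) :
    (fun i => f i - m) ⬝ᵥ (fun i => f i - m)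
      = Fintype.card ι * (1 / (Fintype.card ι : ℝ) * ∑ i, f i ^ 2 - m ^ 2) := by
  rcases isEmpty_or_nonempty ι with hι | hι
  · simp
  simp only [dotProduct, ← sq, sub_sq, Finset.sum_add_distrib, Finset.sum_sub_distrib,
    ← Finset.sum_mul, ← Finset.mul_sum, Finset.sum_const, Finset.card_univ, nsmul_eq_mul]
  rw [hm]
  field_simp
  ring

end Quadratic

section Bipartite

variable {α β R : Type*} [Fintype α] [Fintype β]

theorem sumElim_dotProduct_fromBlocks_mulVec_sumElim [CommSemiring R] (B : Matrix α β R)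
    (x : α → R) (y : β → R) :
    Sum.elim x y ⬝ᵥ fromBlocks 0 B Bᵀ 0 *ᵥ Sum.elim x y = 2 * (x ⬝ᵥ B *ᵥ y) := by
  rw [fromBlocks_mulVec, sumElim_dotProduct_sumElim]
  simp only [Sum.elim_comp_inl, Sum.elim_comp_inr, zero_mulVec, zero_add, add_zero]
  rw [dotProduct_mulVec y, vecMul_transpose, dotProduct_comm (B *ᵥ y), two_mul]

theorem add_smul_one_dotProduct_mulVec_add_smul_one [CommRing R] {B : Matrix α β R} {d : R}
    (hrow : B *ᵥ 1 = d • 1) (hcol : Bᵀ *ᵥ 1 = d • 1) {x : α → R} {y : β → R}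
    (hx : x ⬝ᵥ 1 = 0) (hy : y ⬝ᵥ 1 = 0) (a b : R) :
    (x + a • 1) ⬝ᵥ B *ᵥ (y + b • 1) = x ⬝ᵥ B *ᵥ y + a * b * d * Fintype.card α := by
  have hone : (1 : α → R) ⬝ᵥ B *ᵥ y = 0 := by
    rw [dotProduct_mulVec, ← mulVec_transpose, hcol, smul_dotProduct, dotProduct_comm, hy,
      smul_zero]
  simp only [mulVec_add, mulVec_smul, hrow, add_dotProduct, dotProduct_add, smul_dotProduct,
    dotProduct_smul, hx, hone, one_dotProduct_one, smul_eq_mul]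
  ring

theorem abs_dotProduct_mulVec_le {B : Matrix α β ℝ} {c : ℝ}
    (hc : ∀ z, z ⬝ᵥ 1 = 0 → z ⬝ᵥ fromBlocks 0 B Bᵀ 0 *ᵥ z ≤ c * (z ⬝ᵥ z))
    {x : α → ℝ} {y : β → ℝ} (hx : x ⬝ᵥ 1 = 0) (hy : y ⬝ᵥ 1 = 0) :
    |x ⬝ᵥ B *ᵥ y| ≤ c * √((x ⬝ᵥ x) * (y ⬝ᵥ y)) := by
  refine abs_le_mul_sqrt_mul_of_forall (Finset.sum_nonneg fun i _ => mul_self_nonneg (x i))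
    (Finset.sum_nonneg fun i _ => mul_self_nonneg (y i)) fun t s => ?_
  have hz : Sum.elim (t • x) (s • y) ⬝ᵥ 1 = 0 := by
    rw [← Sum.elim_one_one, sumElim_dotProduct_sumElim, smul_dotProduct, smul_dotProduct, hx, hy]
    simp
  have := hc _ hz
  rw [sumElim_dotProduct_fromBlocks_mulVec_sumElim, sumElim_dotProduct_sumElim] at this
  simp only [mulVec_smul, smul_dotProduct, dotProduct_smul, smul_eq_mul] at this
  linarith

end Bipartite

namespace SimpleGraph

variable {α β R : Type*} (G : SimpleGraph (α ⊕ β)) [DecidableRel G.Adj]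

theorem adjMatrix_eq_fromBlocks [Zero R] [One R]
    (hL : ∀ a a' : α, ¬ G.Adj (.inl a) (.inl a')) (hR : ∀ b b' : β, ¬ G.Adj (.inr b) (.inr b')) :
    G.adjMatrix R = fromBlocks 0 (G.adjMatrix R).toBlocks₁₂ (G.adjMatrix R).toBlocks₁₂ᵀ 0 := by
  ext (a | b) (a' | b') <;> simp [toBlocks₁₂, hL, hR, G.adj_comm]

variable [Fintype α] [Fintype β]

theorem sum_sum_neighborFinset_inl_mul [CommSemiring R]
    (hL : ∀ a a' : α, ¬ G.Adj (.inl a) (.inl a')) (χ : α ⊕ β → R) :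
    ∑ a, ∑ v ∈ G.neighborFinset (.inl a), χ (.inl a) * χ v
      = (χ ∘ .inl) ⬝ᵥ (G.adjMatrix R).toBlocks₁₂ *ᵥ (χ ∘ .inr) := by
  simp [← Finset.mul_sum, ← adjMatrix_mulVec_apply, dotProduct, mulVec, Fintype.sum_sum_type,
    toBlocks₁₂, hL]

theorem toBlocks₁₂_mulVec_one [NonAssocSemiring R] {d : ℕ}
    (hL : ∀ a a' : α, ¬ G.Adj (.inl a) (.inl a')) (hR : ∀ b b' : β, ¬ G.Adj (.inr b) (.inr b'))
    (hreg : G.IsRegularOfDegree d) :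
    (G.adjMatrix R).toBlocks₁₂ *ᵥ 1 = (d : R) • 1 ∧
      (G.adjMatrix R).toBlocks₁₂ᵀ *ᵥ 1 = (d : R) • 1 := by
  have h : G.adjMatrix R *ᵥ 1 = (d : R) • 1 :=
    funext fun v => by simpa using adjMatrix_mulVec_const_apply_of_regular (a := (1 : R)) hreg
  rw [adjMatrix_eq_fromBlocks G hL hR, ← Sum.elim_one_one, fromBlocks_mulVec] at h
  exact ⟨funext fun a => by simpa using congrFun h (.inl a),
    funext fun b => by simpa using congrFun h (.inr b)⟩

end SimpleGraph

/-- `V' = Fin n` via `Sum.inl` and `V'' = Fin n` via `Sum.inr`. `γ * Δ` is the second largest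
eigenvalue of `A_G`, characterized as the greatest Rayleigh quotient over nonzero vectors orthogonal
to the all-one vector. Each edge has exactly one endpoint in `V'`, so the edge sum is the sum over
`u ∈ V'` of sums over the neighbors of `u`. -/
theorem stmt_6_general (n Δ : ℕ) (hn : 1 < n) (hΔ : 0 < Δ)
    (G : SimpleGraph (Fin n ⊕ Fin n)) [DecidableRel G.Adj]
    (hbipL : ∀ a b : Fin n, ¬ G.Adj (Sum.inl a) (Sum.inl b))
    (hbipR : ∀ a b : Fin n, ¬ G.Adj (Sum.inr a) (Sum.inr b))
    (hreg : ∀ v, G.degree v = Δ)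
    (γ : ℝ)
    (hγ : IsGreatest {ρ : ℝ | ∃ x : (Fin n ⊕ Fin n) → ℝ, x ≠ 0 ∧
        (x ⬝ᵥ (fun _ => 1)) = 0 ∧
        x ⬝ᵥ ((G.adjMatrix ℝ).mulVec x) = ρ * (x ⬝ᵥ x)} (γ * Δ))
    (χ : (Fin n ⊕ Fin n) → ℝ)
    (Ew E₁ E₂ E₁sq E₂sq Var₁ Var₂ : ℝ)
    (hEw : Ew = (1 / ((Δ : ℝ) * n)) *
        ∑ u : Fin n, ∑ v ∈ G.neighborFinset (Sum.inl u), χ (Sum.inl u) * χ v)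
    (hE₁ : E₁ = (1 / (n : ℝ)) * ∑ u : Fin n, χ (Sum.inl u))
    (hE₂ : E₂ = (1 / (n : ℝ)) * ∑ v : Fin n, χ (Sum.inr v))
    (hE₁sq : E₁sq = (1 / (n : ℝ)) * ∑ u : Fin n, (χ (Sum.inl u)) ^ 2)
    (hE₂sq : E₂sq = (1 / (n : ℝ)) * ∑ v : Fin n, (χ (Sum.inr v)) ^ 2)
    (hVar₁ : Var₁ = E₁sq - E₁ ^ 2)
    (hVar₂ : Var₂ = E₂sq - E₂ ^ 2) :
    |Ew - E₁ * E₂| ≤ γ * Real.sqrt (Var₁ * Var₂) := by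
  set B := (G.adjMatrix ℝ).toBlocks₁₂
  set x : Fin n → ℝ := fun a => χ (.inl a) - E₁
  set y : Fin n → ℝ := fun b => χ (.inr b) - E₂
  have hx : x ⬝ᵥ 1 = 0 := sub_mean_dotProduct_one (by rwa [Fintype.card_fin])
  have hy : y ⬝ᵥ 1 = 0 := sub_mean_dotProduct_one (by rwa [Fintype.card_fin])
  have hxx : x ⬝ᵥ x = n * Var₁ := by
    rw [sub_mean_dotProduct_self (by rwa [Fintype.card_fin]), Fintype.card_fin, ← hE₁sq, hVar₁]
  have hyy : y ⬝ᵥ y = n * Var₂ := by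
    rw [sub_mean_dotProduct_self (by rwa [Fintype.card_fin]), Fintype.card_fin, ← hE₂sq, hVar₂]
  obtain ⟨hrow, hcol⟩ := G.toBlocks₁₂_mulVec_one (R := ℝ) hbipL hbipR hreg
  have hedge : ∑ u : Fin n, ∑ v ∈ G.neighborFinset (Sum.inl u), χ (Sum.inl u) * χ v
      = x ⬝ᵥ B *ᵥ y + E₁ * E₂ * Δ * n := by
    rw [G.sum_sum_neighborFinset_inl_mul hbipL,
      show χ ∘ .inl = x + E₁ • 1 by ext; simp [x],
      show χ ∘ .inr = y + E₂ • 1 by ext; simp [y],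
      add_smul_one_dotProduct_mulVec_add_smul_one hrow hcol hx hy, Fintype.card_fin]
  have hmix : |x ⬝ᵥ B *ᵥ y| ≤ γ * Δ * √((n * Var₁) * (n * Var₂)) := by
    rw [← hxx, ← hyy]
    refine abs_dotProduct_mulVec_le (fun z hz => ?_) hx hy
    rw [← G.adjMatrix_eq_fromBlocks hbipL hbipR]
    exact dotProduct_mulVec_le_of_mem_upperBounds hγ.2 hz
  have hΔn : (0 : ℝ) < Δ * n := mul_pos (Nat.cast_pos.mpr hΔ) (Nat.cast_pos.mpr (by omega))
  have hsqrt : √((n * Var₁) * (n * Var₂)) = n * √(Var₁ * Var₂) := by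
    rw [show (n * Var₁) * (n * Var₂) = (n : ℝ) ^ 2 * (Var₁ * Var₂) by ring,
      Real.sqrt_mul (sq_nonneg _), Real.sqrt_sq n.cast_nonneg]
  rw [hEw, hedge, show 1 / (Δ * n) * (x ⬝ᵥ B *ᵥ y + E₁ * E₂ * Δ * n) - E₁ * E₂
      = x ⬝ᵥ B *ᵥ y / (Δ * n) by field_simp; ring, abs_div, abs_of_pos hΔn, div_le_iff₀ hΔn]
  exact hmix.trans_eq (by rw [hsqrt]; ring)

/-- Expander mixing lemma in expectation/variance form.
`G` is a bipartite `Δ`-regular connected graph on parts `V' = Fin n` (via `Sum.inl`) and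
`V'' = Fin n` (via `Sum.inr`), `n > 1`, with second-eigenvalue ratio `γ` (i.e. `γ * Δ` is
the second largest eigenvalue of the adjacency matrix, characterized as the greatest Rayleigh
quotient over nonzero vectors orthogonal to the all-one vector).  For any `χ` on the vertices,
the average of `w(e) = χ(u)χ(v)` over the `Δn` edges (each edge of the bipartite graph has
exactly one endpoint in `V'`, so the edge sum equals the sum over `u ∈ V'` of sums over the
neighbors of `u`) satisfies
`|E_G{w} − E'_G{χ}·E''_G{χ}| ≤ γ·√(Var'_G{χ}·Var''_G{χ})`. -/
theorem stmt_6 (n Δ : ℕ) (hn : 1 < n) (hΔ : 0 < Δ)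
    (G : SimpleGraph (Fin n ⊕ Fin n)) [DecidableRel G.Adj]
    (hbipL : ∀ a b : Fin n, ¬ G.Adj (Sum.inl a) (Sum.inl b))
    (hbipR : ∀ a b : Fin n, ¬ G.Adj (Sum.inr a) (Sum.inr b))
    (hreg : ∀ v, G.degree v = Δ)
    (hconn : G.Connected)
    (γ : ℝ)
    (hγ : IsGreatest {ρ : ℝ | ∃ x : (Fin n ⊕ Fin n) → ℝ, x ≠ 0 ∧
        (x ⬝ᵥ (fun _ => 1)) = 0 ∧
        x ⬝ᵥ ((G.adjMatrix ℝ).mulVec x) = ρ * (x ⬝ᵥ x)} (γ * Δ))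
    (χ : (Fin n ⊕ Fin n) → ℝ)
    (Ew E₁ E₂ E₁sq E₂sq Var₁ Var₂ : ℝ)
    (hEw : Ew = (1 / ((Δ : ℝ) * n)) *
        ∑ u : Fin n, ∑ v ∈ G.neighborFinset (Sum.inl u), χ (Sum.inl u) * χ v)
    (hE₁ : E₁ = (1 / (n : ℝ)) * ∑ u : Fin n, χ (Sum.inl u))
    (hE₂ : E₂ = (1 / (n : ℝ)) * ∑ v : Fin n, χ (Sum.inr v))
    (hE₁sq : E₁sq = (1 / (n : ℝ)) * ∑ u : Fin n, (χ (Sum.inl u)) ^ 2)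
    (hE₂sq : E₂sq = (1 / (n : ℝ)) * ∑ v : Fin n, (χ (Sum.inr v)) ^ 2)
    (hVar₁ : Var₁ = E₁sq - E₁ ^ 2)
    (hVar₂ : Var₂ = E₂sq - E₂ ^ 2) :
    |Ew - E₁ * E₂| ≤ γ * Real.sqrt (Var₁ * Var₂) :=
  stmt_6_general n Δ hn hΔ G hbipL hbipR hreg γ hγ χ Ew E₁ E₂ E₁sq E₂sq Var₁ Var₂ hEw hE₁ hE₂ hE₁sq
    hE₂sq hVar₁ hVar₂
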